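/- For natural numbers n, u, r, i with i ≤ r, the identity ∑_{t=i}^{r} (-1)^{t-i} · C(t, i) · C(n-t, r-t) · C(u, t) = C(n-u, r-i) · C(u, i) holds (interpreting binomial coefficients with possibly negative upper argument via the generalized convention C(-a, s) = (-1)^s · C(a+s-1, s)). -/

import Mathlib

/-- The generalized binomial coefficient `C(k, s)` for an integer upper argument `k`
and natural lower argument `s`, defined by `C(k, s) = ∏_{j=0}^{s-1} (k - j) / s!`. -/
noncomputable def genChoose (k : ℤ) (s : ℕ) : ℚ :=
  (∏ j ∈ Finset.range s, ((k : ℚ) - j)) / (s.factorial : ℚ)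

/-!
`genChoose` is `Ring.choose` on `ℚ`, and the identity holds in every binomial ring. Trinomial
revision `C(t, i) C(u, t) = C(u, i) C(u - i, t - i)` pulls out the factor `C(u, i)`. In what
remains, upper negation turns `C(n - t, r - t)` into `±C(r - 1 - n, r - t)`; the signs then
cancel against `(-1)^(t - i)` up to `(-1)^(r - i)`, and Chu–Vandermonde sums the result to
`(-1)^(r - i) C(u - n + r - i - 1, r - i) = C(n - u, r - i)`, by upper negation once more.
-/

open Finset

namespace Ring

variable {R : Type*} [CommRing R] [BinomialRing R]

theorem choose_neg_eq_neg_one_pow_mul (r : R) (n : ℕ) :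
    choose (-r) n = (-1) ^ n * choose (r + n - 1) n := by
  simp [choose_neg, Units.smul_def, Int.negOnePow_def]

theorem choose_natCast_mul_choose (r : R) {n k : ℕ} (hkn : k ≤ n) :
    choose (n : R) k * choose r n = choose r k * choose (r - k) (n - k) := by
  rw [choose_natCast, ← nsmul_eq_mul, choose_smul_choose r hkn]

theorem sum_neg_one_pow_mul_choose_sub_mul_choose (x y : R) (m : ℕ) :
    ∑ s ∈ range (m + 1), (-1) ^ s * choose (y - s) (m - s) * choose x s
      = choose (y - x) m := by
  have hterm : ∀ s ∈ range (m + 1), (-1) ^ s * choose (y - s) (m - s) * choose x s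
      = (-1) ^ m * (choose x s * choose (m - 1 - y) (m - s)) := by
    intro s hs
    have hsm : s ≤ m := Nat.lt_succ_iff.mp (mem_range.mp hs)
    rw [← neg_sub, choose_neg_eq_neg_one_pow_mul, Nat.cast_sub hsm,
      show s - y + (m - s : R) - 1 = m - 1 - y by ring, ← mul_assoc, ← pow_add,
      Nat.add_sub_cancel' hsm]
    ring
  have hneg := choose_neg_eq_neg_one_pow_mul (x - y) m
  rw [neg_sub, show x - y + m - 1 = x + (m - 1 - y) by ring] at hneg
  rw [sum_congr rfl hterm, ← mul_sum, ← Nat.sum_antidiagonal_eq_sum_range_succ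
    (fun a b => choose x a * choose (m - 1 - y) b), ← add_choose_eq m (Commute.all _ _), hneg]

theorem sum_Icc_neg_one_pow_mul_choose_mul_choose_mul_choose (n u : R) {i r : ℕ} (h : i ≤ r) :
    ∑ t ∈ Icc i r, (-1) ^ (t - i) * choose (t : R) i * choose (n - t) (r - t) * choose u t
      = choose (n - u) (r - i) * choose u i := by
  have hterm : ∀ s ∈ range (r + 1 - i),
      (-1) ^ (i + s - i) * choose ((i + s : ℕ) : R) i * choose (n - (i + s : ℕ)) (r - (i + s))
        * choose u (i + s)
      = choose u i * ((-1) ^ s * choose (n - i - s) (r - i - s) * choose (u - i) s) := by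
    intro s _
    rw [Nat.add_sub_cancel_left, mul_right_comm _ _ (choose u _), mul_assoc _ (choose _ i),
      choose_natCast_mul_choose u (Nat.le_add_right i s), Nat.add_sub_cancel_left, Nat.cast_add,
      Nat.sub_sub, sub_add_eq_sub_sub]
    ring
  rw [← Ico_add_one_right_eq_Icc, sum_Ico_eq_sum_range, sum_congr rfl hterm, ← mul_sum,
    show r + 1 - i = r - i + 1 by omega, sum_neg_one_pow_mul_choose_sub_mul_choose,
    sub_sub_sub_cancel_right, mul_comm]

end Ring

open Polynomial in
theorem genChoose_eq_choose (k : ℤ) (s : ℕ) : genChoose k s = Ring.choose (k : ℚ) s := by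
  rw [genChoose, Ring.choose_eq_smul, ← aeval_eq_smeval, aeval_def, ← eval_map,
    descPochhammer_map, descPochhammer_eval_eq_prod_range, smul_eq_mul, div_eq_inv_mul]

theorem delsarte_binom_identity (n u r i : ℕ) (h : i ≤ r) :
    ∑ t ∈ Finset.Icc i r,
      (-1 : ℚ) ^ (t - i) * genChoose (t : ℤ) i * genChoose ((n : ℤ) - t) (r - t)
        * genChoose (u : ℤ) t
      = genChoose ((n : ℤ) - u) (r - i) * genChoose (u : ℤ) i := by
  simp only [genChoose_eq_choose]
  push_cast
  exact Ring.sum_Icc_neg_one_pow_mul_choose_mul_choose_mul_choose (n : ℚ) u h
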